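/- arXiv:1302.2869 — 3 statements merged into one kernel-verified Lean document; each statement's English description precedes it below -/
import Mathlib

section
/- Let π12, π23 > 0, a > 0, b ≥ 0 and V satisfy a + b < V < (1 + π12/(π12+π23))·a + b. Then: (i) μ := (V−b−a)/a satisfies 0 < μ < 1; (ii) λ := (π23·(V−b−a))/(π12·(2a+b−V)) satisfies 0 < λ < 1; and (iii) μ = π12·λ/(π12·λ + π23). -/
/-- Characterization of the delayed-trade equilibrium quantities in the
two-link network: `μ = (V−b−a)/a ∈ (0,1)`, the trade probability
`λ = π23(V−b−a)/(π12(2a+b−V)) ∈ (0,1)`, and the balance identity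
`μ = π12·λ/(π12·λ + π23)`. -/
theorem delayed_trade_equilibrium (π12 π23 a b V : ℝ)
    (h12 : 0 < π12) (h23 : 0 < π23) (ha : 0 < a) (hb : 0 ≤ b)
    (hVlow : a + b < V) (hVhigh : V < (1 + π12 / (π12 + π23)) * a + b) :
    (0 < (V - b - a) / a ∧ (V - b - a) / a < 1) ∧
    (0 < (π23 * (V - b - a)) / (π12 * (2 * a + b - V)) ∧
      (π23 * (V - b - a)) / (π12 * (2 * a + b - V)) < 1) ∧
    (V - b - a) / a =
      π12 * ((π23 * (V - b - a)) / (π12 * (2 * a + b - V))) /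
        (π12 * ((π23 * (V - b - a)) / (π12 * (2 * a + b - V))) + π23) := by
  have hsum : 0 < π12 + π23 := by linarith
  have hs : 0 < V - b - a := by linarith
  -- from hVhigh: (V - b - a) * (π12 + π23) < π12 * a
  have hkey : (V - b - a) * (π12 + π23) < π12 * a := by
    have hc : π12 / (π12 + π23) * (π12 + π23) = π12 := div_mul_cancel₀ _ hsum.ne'
    nlinarith [mul_lt_mul_of_pos_right hVhigh hsum]
  have hd : 0 < 2 * a + b - V := by nlinarith
  have hden : 0 < π12 * (2 * a + b - V) := mul_pos h12 hd
  refine ⟨⟨div_pos hs ha, (div_lt_one ha).mpr (by nlinarith)⟩,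
    ⟨div_pos (mul_pos h23 hs) hden, (div_lt_one hden).mpr (by nlinarith)⟩, ?_⟩
  rw [div_eq_div_iff ha.ne' (by positivity)]
  field_simp
  ring_nf
  have hd' : (-V + b + a * 2) ≠ 0 := by intro h; linarith
  have hinv : (-V + b + a * 2) * (-V + b + a * 2)⁻¹ = 1 := mul_inv_cancel₀ hd'
  linear_combination (-1 : ℝ) * hinv
end

section
/- Define for x ∈ [0,4] the producer surplus S_p(x) = 1/2 if x < 1, S_p(x) = 0 if 1 < x < 4/3, and S_p(x) = (3x−4)/5 if 4/3 ≤ x ≤ 4. Then S_p is discontinuous at x = 1 with a downward jump (limit from the left 1/2, limit from the right 0), even though the total trade surplus max{1, x} is nondecreasing in x. -/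
open Filter

/-- Producer surplus in the triangle network example as a function of `x`. -/
noncomputable def producerSurplus (x : ℝ) : ℝ :=
  if x < 1 then 1/2 else if x < 4/3 then 0 else (3*x - 4)/5

/-- The producer surplus is discontinuous at `x = 1` with a downward jump:
the limit from the left is `1/2` and the limit from the right is `0`, even
though the total trade surplus `max 1 x` is nondecreasing in `x`. -/
theorem producer_surplus_discontinuous :
    Tendsto producerSurplus (nhdsWithin 1 (Set.Iio 1)) (nhds (1/2)) ∧
    Tendsto producerSurplus (nhdsWithin 1 (Set.Ioi 1)) (nhds 0) ∧
    ¬ ContinuousAt producerSurplus 1 ∧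
    Monotone (fun x : ℝ => max 1 x) := by
  have hleft : Tendsto producerSurplus (nhdsWithin 1 (Set.Iio 1)) (nhds (1/2)) := by
    apply Tendsto.congr' _ tendsto_const_nhds
    filter_upwards [self_mem_nhdsWithin] with x hx
    simp [producerSurplus, Set.mem_Iio.mp hx]
  have hright : Tendsto producerSurplus (nhdsWithin 1 (Set.Ioi 1)) (nhds 0) := by
    apply Tendsto.congr' _ tendsto_const_nhds
    filter_upwards [self_mem_nhdsWithin,
      Ioo_mem_nhdsGT_of_mem (by norm_num : (1:ℝ) ∈ Set.Ico 1 (4/3))] with x hx hx2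
    simp [producerSurplus, not_lt.mpr (le_of_lt (Set.mem_Ioi.mp hx)), hx2.2]
  refine ⟨hleft, hright, ?_, ?_⟩
  · intro hc
    have h1 : producerSurplus 1 = 0 := by norm_num [producerSurplus]
    have := (hc.tendsto.mono_left nhdsWithin_le_nhds :
      Tendsto producerSurplus (nhdsWithin 1 (Set.Iio 1)) (nhds (producerSurplus 1)))
    rw [h1] at this
    have := tendsto_nhds_unique hleft this
    norm_num at this
  · exact fun a b hab => max_le_max le_rfl hab
end

section
/- Under the hypotheses of the previous statement applied to every middleman m on a route from p to c, one has u1(p) + u0(c) ≥ V − min over middlemen m of (C_{pm} + C_{mc}) − 2ε. Consequently, if some middleman m' has C_{pm'} + C_{mc'} strictly greater than this minimum plus 2ε, then z_{pm'} + z_{m'c} < 0, i.e., at least one of z_{pm'}, z_{m'c} is strictly negative. -/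
/-- Applying the surplus bound to every middleman on a route from producer `p`
to consumer `c`: `u1(p) + u0(c) ≥ V − min_m (C_{pm} + C_{mc}) − 2ε`, and any
middleman `m'` whose route cost strictly exceeds this minimum plus `2ε` has
`z_{pm'} + z_{m'c} < 0`, i.e. at least one of the two trade surpluses is
strictly negative. -/
theorem cheapest_route_bound {ι : Type*} (M : Finset ι) (hM : M.Nonempty)
    (V ε u1p u0c : ℝ) (u1m u0m Cpm Cmc : ι → ℝ)
    (hu1p : u1p ∈ Set.Icc (0:ℝ) V) (hu0c : u0c ∈ Set.Icc (0:ℝ) V)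
    (hC : ∀ m ∈ M, 0 ≤ Cpm m ∧ 0 ≤ Cmc m) (hε : 0 < ε)
    (hzpm : ∀ m ∈ M, (u1m m - u0m m) - u1p - Cpm m ≤ ε)
    (hzmc : ∀ m ∈ M, (V - u0c) - (u1m m - u0m m) - Cmc m ≤ ε) :
    V - M.inf' hM (fun m => Cpm m + Cmc m) - 2 * ε ≤ u1p + u0c ∧
    ∀ m' ∈ M, M.inf' hM (fun m => Cpm m + Cmc m) + 2 * ε < Cpm m' + Cmc m' →
      ((u1m m' - u0m m') - u1p - Cpm m') +
        ((V - u0c) - (u1m m' - u0m m') - Cmc m') < 0 ∧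
      ((u1m m' - u0m m') - u1p - Cpm m' < 0 ∨
        (V - u0c) - (u1m m' - u0m m') - Cmc m' < 0) := by
  obtain ⟨m₀, hm₀, hinf⟩ := Finset.exists_mem_eq_inf' hM (fun m => Cpm m + Cmc m)
  have key := add_le_add (hzpm m₀ hm₀) (hzmc m₀ hm₀)
  have h1 : V - M.inf' hM (fun m => Cpm m + Cmc m) - 2 * ε ≤ u1p + u0c := by
    rw [hinf]; linarith
  refine ⟨h1, fun m' hm' hlt => ?_⟩
  have hsum : ((u1m m' - u0m m') - u1p - Cpm m') +
      ((V - u0c) - (u1m m' - u0m m') - Cmc m') < 0 := by linarith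
  refine ⟨hsum, ?_⟩
  by_contra h
  push_neg at h
  linarith [h.1, h.2]
end
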